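/- Let q, a, b be elements of a field (e.g. ℝ) and suppose b·q^m = 1 for some nonnegative integer m. Then the polynomial p_{m+1}(x|q,a,b) divides p_n(x|q,a,b) for every n ≥ m+1. -/
import Mathlib


open Polynomial Finset

noncomputable section

variable {F : Type*} [Field F]

/-- The `q`-integer `[n]_q = 1 + q + ⋯ + q^{n-1}`. -/
def qInt (q : F) (n : ℕ) : F := ∑ i ∈ Finset.range n, q ^ i

/-- The renormalized Al-Salam–Chihara polynomials over a field:
`p_{-1} = 0`, `p_0 = 1`,
`p_{n+1}(x) = (x - a q^n) p_n(x) - (1 - b q^{n-1}) [n]_q p_{n-1}(x)`. -/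
def ascPoly (q a b : F) : ℕ → Polynomial F
  | 0 => 1
  | 1 => X - C a
  | n + 2 => (X - C (a * q ^ (n + 1))) * ascPoly q a b (n + 1)
      - C ((1 - b * q ^ n) * qInt q (n + 1)) * ascPoly q a b n

/-- If `b q^m = 1` for some nonnegative integer `m`, then the polynomial
`p_{m+1}(x|q,a,b)` divides `p_n(x|q,a,b)` for every `n ≥ m + 1`. -/
theorem ascPoly_dvd (q a b : F) (m : ℕ) (hm : b * q ^ m = 1)
    (n : ℕ) (hn : m + 1 ≤ n) :
    ascPoly q a b (m + 1) ∣ ascPoly q a b n := by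
  obtain ⟨k, rfl⟩ := Nat.exists_eq_add_of_le hn
  clear hn
  induction k using Nat.twoStepInduction with
  | zero => simp
  | one =>
    have h : ascPoly q a b (m + 1 + 1) =
        (X - C (a * q ^ (m + 1))) * ascPoly q a b (m + 1)
          - C ((1 - b * q ^ m) * qInt q (m + 1)) * ascPoly q a b m := rfl
    rw [h, hm]
    simp
  | more k ih1 ih2 =>
    have e2 : m + 1 + (k + 2) = (m + 1 + k) + 2 := by omega
    have e1 : m + 1 + k + 1 = m + 1 + (k + 1) := by omega
    rw [e2, ascPoly, e1]
    exact dvd_sub (Dvd.dvd.mul_left ih2 _) (Dvd.dvd.mul_left ih1 _)
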